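/- arXiv:1405.4270 — 2 statements merged into one kernel-verified Lean document; each statement's English description precedes it below -/
import Mathlib

section
/- Fix a real α with 0 < α ≤ 1, and let λ₁, λ₂ > 0 and θ₁, θ₂ > 0 be positive reals such that (λ₁, λ₂) is majorized by (θ₁, θ₂), i.e., λ₁ + λ₂ = θ₁ + θ₂ and max(λ₁, λ₂) ≤ max(θ₁, θ₂). Then the ratio of reverse hazard rates r_{2:2}^θ(t) / r_{2:2}^λ(t) = [u(θ₁ t) + u(θ₂ t)] / [u(λ₁ t) + u(λ₂ t)], where u(s) = s^α / (e^{s^α} − 1), is increasing in t on (0, ∞). -/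
/-!
Write `u x = x / (eˣ - 1)` and `v x = x + u x = x eˣ / (eˣ - 1)`; then `x u' = u (1 - v)`. After the
substitution `s = tᵅ` the logarithmic derivative of `s ↦ u (c₁ s) + u (c₂ s)` is `(1 - M) / s`,
where `M` is the mean of `v (c₁ s)`, `v (c₂ s)` with weights `u (c₁ s)`, `u (c₂ s)`. So the ratio
increases as soon as `M` is smaller at `(θ₁ᵅ s, θ₂ᵅ s)` than at `(λ₁ᵅ s, λ₂ᵅ s)`. By concavity of
`x ↦ xᵅ` the pair `(θ₁ᵅ, θ₂ᵅ)` is the more spread out one and has the smaller sum. The mean `M`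
increases with its smaller argument (`u` decreases, `v` increases) and, at fixed sum, decreases as
the arguments spread apart: this uses that `u v'` decreases, as the product of the decreasing
positive functions `u v` and `(1 - u) / x`, which rests on `(2 - x) eˣ ≤ 2 + x` and
`x² eˣ ≤ (eˣ - 1)²`.
-/

open Real Set

theorem two_sub_mul_exp_le_two_add {x : ℝ} (hx : 0 ≤ x) : (2 - x) * exp x ≤ 2 + x := by
  rcases le_or_gt 2 x with h2 | h2
  · nlinarith [exp_pos x]
  have hy : |x / 2| < 1 := by rw [abs_of_nonneg (by positivity)]; linarith
  have hlog : 2 * (x / 2) ≤ log (1 + x / 2) - log (1 - x / 2) := by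
    simpa using le_hasSum (hasSum_log_sub_log_of_abs_lt_one hy) 0 fun k _ => by positivity
  rw [mul_div_cancel₀ x two_ne_zero, ← log_div (by linarith) (by linarith),
    le_log_iff_exp_le (by apply div_pos <;> linarith), le_div_iff₀ (by linarith)] at hlog
  linarith

theorem sq_mul_exp_le_sq_exp_sub_one (x : ℝ) : x ^ 2 * exp x ≤ (exp x - 1) ^ 2 := by
  have hsinh : (x / 2) ^ 2 ≤ sinh (x / 2) ^ 2 := by
    refine sq_le_sq.2 ?_
    rw [abs_sinh]
    exact self_le_sinh_iff.2 (abs_nonneg _)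
  have hexp : (exp x - 1) ^ 2 = 4 * exp x * sinh (x / 2) ^ 2 := by
    have h := exp_pos (x / 2)
    rw [sinh_eq, exp_neg, show exp x = exp (x / 2) ^ 2 by rw [← exp_nat_mul]; ring_nf]
    field_simp
    ring
  nlinarith [exp_pos x]

theorem monotoneOn_of_hasDerivAt_of_nonneg {D : Set ℝ} (hD : Convex ℝ D) {f f' : ℝ → ℝ}
    (hf : ∀ x ∈ D, HasDerivAt f (f' x) x) (hf' : ∀ x ∈ interior D, 0 ≤ f' x) :
    MonotoneOn f D :=
  monotoneOn_of_hasDerivWithinAt_nonneg hD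
    (fun x hx => (hf x hx).continuousAt.continuousWithinAt)
    (fun x hx => (hf x (interior_subset hx)).hasDerivWithinAt) hf'

theorem antitoneOn_of_hasDerivAt_of_nonpos {D : Set ℝ} (hD : Convex ℝ D) {f f' : ℝ → ℝ}
    (hf : ∀ x ∈ D, HasDerivAt f (f' x) x) (hf' : ∀ x ∈ interior D, f' x ≤ 0) :
    AntitoneOn f D :=
  antitoneOn_of_hasDerivWithinAt_nonpos hD
    (fun x hx => (hf x hx).continuousAt.continuousWithinAt)
    (fun x hx => (hf x (interior_subset hx)).hasDerivWithinAt) hf'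

theorem monotoneOn_div_of_hasDerivAt {D : Set ℝ} (hD : Convex ℝ D) {f g f' g' : ℝ → ℝ}
    (hf : ∀ x ∈ D, HasDerivAt f (f' x) x) (hg : ∀ x ∈ D, HasDerivAt g (g' x) x)
    (hg₀ : ∀ x ∈ D, g x ≠ 0) (h : ∀ x ∈ interior D, f x * g' x ≤ f' x * g x) :
    MonotoneOn (fun x => f x / g x) D :=
  monotoneOn_of_hasDerivAt_of_nonneg hD (fun x hx => (hf x hx).div (hg x hx) (hg₀ x hx))
    fun x hx => div_nonneg (sub_nonneg.2 (h x hx)) (sq_nonneg _)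

theorem antitoneOn_div_of_hasDerivAt {D : Set ℝ} (hD : Convex ℝ D) {f g f' g' : ℝ → ℝ}
    (hf : ∀ x ∈ D, HasDerivAt f (f' x) x) (hg : ∀ x ∈ D, HasDerivAt g (g' x) x)
    (hg₀ : ∀ x ∈ D, g x ≠ 0) (h : ∀ x ∈ interior D, f' x * g x ≤ f x * g' x) :
    AntitoneOn (fun x => f x / g x) D :=
  antitoneOn_of_hasDerivAt_of_nonpos hD (fun x hx => (hf x hx).div (hg x hx) (hg₀ x hx))
    fun x hx => div_nonpos_of_nonpos_of_nonneg (sub_nonpos.2 (h x hx)) (sq_nonneg _)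

theorem HasDerivAt.add_comp_const_sub {f : ℝ → ℝ} {f₁ f₂ S p : ℝ} (h₁ : HasDerivAt f f₁ p)
    (h₂ : HasDerivAt f f₂ (S - p)) : HasDerivAt (fun x => f x + f (S - x)) (f₁ - f₂) p :=
  (h₁.add (h₂.comp p ((hasDerivAt_id' p).const_sub S))).congr_deriv (by ring)

theorem ConcaveOn.add_le_add_of_le_of_le {s : Set ℝ} {f : ℝ → ℝ} (hf : ConcaveOn ℝ s f)
    {a b c d : ℝ} (hc : c ∈ s) (hd : d ∈ s) (hda : d ≤ a) (hac : a ≤ c) (hsum : a + b = c + d) :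
    f c + f d ≤ f a + f b := by
  rcases (hda.trans hac).eq_or_lt with hdc | hdc
  · obtain rfl : a = c := le_antisymm hac (hdc ▸ hda)
    obtain rfl : b = d := by linarith
    rfl
  set t := (a - d) / (c - d)
  have ht₀ : 0 ≤ t := div_nonneg (by linarith) (by linarith)
  have ht₁ : t ≤ 1 := (div_le_one (by linarith)).2 (by linarith)
  have ha : t * c + (1 - t) * d = a := by simp only [t]; field_simp; ring
  have hb : (1 - t) * c + t * d = b := by linear_combination -hsum - ha
  have h₁ := hf.2 hc hd ht₀ (sub_nonneg.2 ht₁) (by ring)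
  have h₂ := hf.2 hc hd (sub_nonneg.2 ht₁) ht₀ (by ring)
  simp only [smul_eq_mul, ha, hb] at h₁ h₂
  linarith

namespace ParallelWeibull

noncomputable def u (x : ℝ) : ℝ := x / (exp x - 1)

noncomputable def v (x : ℝ) : ℝ := x + u x

noncomputable def uDeriv (x : ℝ) : ℝ := u x * (1 - v x) / x

noncomputable def vDeriv (x : ℝ) : ℝ := (1 - u x) * v x / x

variable {x : ℝ}

theorem u_pos (hx : 0 < x) : 0 < u x := div_pos hx (sub_pos.2 (one_lt_exp_iff.2 hx))

theorem u_lt_one (hx : 0 < x) : u x < 1 := by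
  rw [u, div_lt_one (sub_pos.2 (one_lt_exp_iff.2 hx))]
  linarith [add_one_lt_exp hx.ne']

theorem one_sub_half_le_u (hx : 0 < x) : 1 - x / 2 ≤ u x := by
  rw [u, le_div_iff₀ (sub_pos.2 (one_lt_exp_iff.2 hx))]
  linarith [two_sub_mul_exp_le_two_add hx.le]

theorem one_le_v (hx : 0 < x) : 1 ≤ v x := by
  linarith [one_sub_half_le_u hx, show v x = x + u x from rfl]

theorem u_mul_v_le_one (hx : 0 < x) : u x * v x ≤ 1 := by
  have h := sub_pos.2 (one_lt_exp_iff.2 hx)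
  have huv : u x * v x = x ^ 2 * exp x / (exp x - 1) ^ 2 := by
    simp only [v, u]; field_simp; ring
  rw [huv, div_le_one (by positivity)]
  exact sq_mul_exp_le_sq_exp_sub_one x

theorem hasDerivAt_u (hx : x ≠ 0) : HasDerivAt u (uDeriv x) x := by
  have hE : exp x - 1 ≠ 0 := sub_ne_zero.2 fun h => hx ((exp_eq_one_iff x).1 h)
  refine ((hasDerivAt_id' x).div ((hasDerivAt_exp x).sub_const 1) hE).congr_deriv ?_
  simp only [uDeriv, v, u]
  field_simp
  ring

theorem hasDerivAt_v (hx : x ≠ 0) : HasDerivAt v (vDeriv x) x := by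
  refine ((hasDerivAt_id' x).add (hasDerivAt_u hx)).congr_deriv ?_
  simp only [vDeriv, uDeriv, v]
  field_simp
  ring

theorem uDeriv_nonpos (hx : 0 < x) : uDeriv x ≤ 0 :=
  div_nonpos_of_nonpos_of_nonneg
    (mul_nonpos_of_nonneg_of_nonpos (u_pos hx).le (by linarith [one_le_v hx])) hx.le

theorem antitoneOn_u : AntitoneOn u (Ioi 0) :=
  antitoneOn_of_hasDerivAt_of_nonpos (convex_Ioi 0) (fun _ hx => hasDerivAt_u (ne_of_gt hx))
    fun _ hx => uDeriv_nonpos (interior_subset hx)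

theorem monotoneOn_v : MonotoneOn v (Ioi 0) :=
  monotoneOn_of_hasDerivAt_of_nonneg (convex_Ioi 0) (fun _ hx => hasDerivAt_v (ne_of_gt hx))
    fun x hx' => by
      have hx : 0 < x := interior_subset hx'
      have := u_lt_one hx
      have := one_le_v hx
      unfold vDeriv
      positivity

theorem hasDerivAt_u_mul_v (hx : x ≠ 0) :
    HasDerivAt (fun x => u x * v x) (uDeriv x * v x + u x * vDeriv x) x :=
  (hasDerivAt_u hx).mul (hasDerivAt_v hx)

theorem antitoneOn_u_mul_v : AntitoneOn (fun x => u x * v x) (Ioi 0) := by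
  refine antitoneOn_of_hasDerivAt_of_nonpos (convex_Ioi 0)
    (fun _ hx => hasDerivAt_u_mul_v (ne_of_gt hx)) fun x hx => ?_
  have hx : 0 < x := interior_subset hx
  have hsum : 2 ≤ u x + v x := by linarith [one_sub_half_le_u hx, show v x = x + u x from rfl]
  have : uDeriv x * v x + u x * vDeriv x = u x * v x * (2 - (u x + v x)) / x := by
    simp only [uDeriv, vDeriv]; field_simp; ring
  rw [this]
  exact div_nonpos_of_nonpos_of_nonneg (mul_nonpos_of_nonneg_of_nonpos
    (mul_pos (u_pos hx) (by linarith [one_le_v hx])).le (by linarith)) hx.le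

theorem antitoneOn_one_sub_u_div : AntitoneOn (fun x => (1 - u x) / x) (Ioi 0) := by
  refine antitoneOn_of_hasDerivAt_of_nonpos (convex_Ioi 0)
    (fun x hx => ((hasDerivAt_u (ne_of_gt hx)).const_sub 1).div (hasDerivAt_id x) (ne_of_gt hx))
    fun x hx => ?_
  have hx : 0 < x := interior_subset hx
  have : (-uDeriv x * x - (1 - u x) * 1) = u x * v x - 1 := by
    simp only [uDeriv, v]; field_simp; ring
  rw [this]
  exact div_nonpos_of_nonpos_of_nonneg (by linarith [u_mul_v_le_one hx]) (sq_nonneg _)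

theorem antitoneOn_u_mul_vDeriv : AntitoneOn (fun x => u x * vDeriv x) (Ioi 0) := by
  intro a ha b hb hab
  have hprod : ∀ x, u x * vDeriv x = u x * v x * ((1 - u x) / x) := fun x => by
    simp only [vDeriv]; ring
  simp only [hprod]
  exact mul_le_mul (antitoneOn_u_mul_v ha hb hab) (antitoneOn_one_sub_u_div ha hb hab)
    (div_nonneg (by linarith [u_lt_one hb]) (le_of_lt hb))
    (mul_pos (u_pos ha) (by linarith [one_le_v ha])).le

noncomputable def vMean (a b : ℝ) : ℝ := (u a * v a + u b * v b) / (u a + u b)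

theorem vMean_le_vMean_right {a b b' : ℝ} (hb : 0 < b) (hbb' : b ≤ b') (hb'a : b' ≤ a) :
    vMean a b ≤ vMean a b' := by
  have hb' : 0 < b' := hb.trans_le hbb'
  have ha : 0 < a := hb'.trans_le hb'a
  have hu : u b' ≤ u b := antitoneOn_u hb hb' hbb'
  have hv : v b ≤ v b' := monotoneOn_v hb hb' hbb'
  have hv' : v b' ≤ v a := monotoneOn_v hb' ha hb'a
  rw [vMean, vMean,
    div_le_div_iff₀ (add_pos (u_pos ha) (u_pos hb)) (add_pos (u_pos ha) (u_pos hb'))]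
  nlinarith [mul_nonneg (u_pos ha).le
      (mul_nonneg (sub_nonneg.2 hu) (sub_nonneg.2 (hv.trans hv'))),
    mul_nonneg (u_pos ha).le (mul_nonneg (u_pos hb').le (sub_nonneg.2 hv)),
    mul_nonneg (u_pos hb).le (mul_nonneg (u_pos hb').le (sub_nonneg.2 hv))]

theorem antitoneOn_vMean_const_sub {S : ℝ} (hS : 0 < S) :
    AntitoneOn (fun p => vMean p (S - p)) (Ico (S / 2) S) := by
  have hpos : ∀ p ∈ Ico (S / 2) S, 0 < p ∧ 0 < S - p := fun p hp =>
    ⟨by linarith [hp.1], by linarith [hp.2]⟩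
  refine antitoneOn_div_of_hasDerivAt (convex_Ico _ _)
    (fun p hp => (hasDerivAt_u_mul_v (hpos p hp).1.ne').add_comp_const_sub
      (hasDerivAt_u_mul_v (hpos p hp).2.ne'))
    (fun p hp => (hasDerivAt_u (hpos p hp).1.ne').add_comp_const_sub
      (hasDerivAt_u (hpos p hp).2.ne'))
    (fun p hp => (add_pos (u_pos (hpos p hp).1) (u_pos (hpos p hp).2)).ne') fun p hp => ?_
  rw [interior_Ico] at hp
  obtain ⟨ha, hb⟩ := hpos p (Ioo_subset_Ico_self hp)
  have hba : S - p ≤ p := by linarith [hp.1]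
  set a := p
  set b := S - p
  -- `(u v)' = u' v + u v'` splits the numerator into a term signed by `u v'` decreasing and one
  -- signed by `v` increasing and `u' ≤ 0`
  have hw := antitoneOn_u_mul_vDeriv hb ha hba
  have hv := monotoneOn_v hb ha hba
  have key : ((uDeriv a * v a + u a * vDeriv a) - (uDeriv b * v b + u b * vDeriv b)) * (u a + u b)
      - (u a * v a + u b * v b) * (uDeriv a - uDeriv b)
      = (u a + u b) * (u a * vDeriv a - u b * vDeriv b)
        + (v a - v b) * (uDeriv a * u b + uDeriv b * u a) := by ring
  nlinarith [mul_nonpos_of_nonneg_of_nonpos (add_pos (u_pos ha) (u_pos hb)).le (sub_nonpos.2 hw),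
    mul_nonpos_of_nonneg_of_nonpos (sub_nonneg.2 hv) (add_nonpos
      (mul_nonpos_of_nonpos_of_nonneg (uDeriv_nonpos ha) (u_pos hb).le)
      (mul_nonpos_of_nonpos_of_nonneg (uDeriv_nonpos hb) (u_pos ha).le))]

theorem vMean_le_vMean {x₁ x₂ y₁ y₂ : ℝ} (hx₂ : 0 < x₂) (hxy₂ : x₂ ≤ y₂) (hy : y₂ ≤ y₁)
    (hyx₁ : y₁ ≤ x₁) (hsum : x₁ + x₂ ≤ y₁ + y₂) : vMean x₁ x₂ ≤ vMean y₁ y₂ := by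
  have hy₂ : 0 < y₂ := hx₂.trans_le hxy₂
  calc vMean x₁ x₂ ≤ vMean x₁ (y₁ + y₂ - x₁) :=
        vMean_le_vMean_right hx₂ (by linarith) (by linarith)
    _ ≤ vMean y₁ (y₁ + y₂ - y₁) :=
        antitoneOn_vMean_const_sub (by linarith) ⟨by linarith, by linarith⟩
          ⟨by linarith, by linarith⟩ hyx₁
    _ = vMean y₁ y₂ := by rw [add_sub_cancel_left]

theorem hasDerivAt_u_comp_mul {c s : ℝ} (hc : 0 < c) (hs : 0 < s) :
    HasDerivAt (fun s => u (c * s)) (u (c * s) * (1 - v (c * s)) / s) s := by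
  refine ((hasDerivAt_u (mul_pos hc hs).ne').comp s
    ((hasDerivAt_id' s).const_mul c)).congr_deriv ?_
  simp only [uDeriv]
  field_simp

theorem hasDerivAt_u_comp_mul_add {c₁ c₂ s : ℝ} (hc₁ : 0 < c₁) (hc₂ : 0 < c₂) (hs : 0 < s) :
    HasDerivAt (fun s => u (c₁ * s) + u (c₂ * s))
      ((u (c₁ * s) + u (c₂ * s)) * (1 - vMean (c₁ * s) (c₂ * s)) / s) s := by
  refine ((hasDerivAt_u_comp_mul hc₁ hs).add (hasDerivAt_u_comp_mul hc₂ hs)).congr_deriv ?_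
  have := add_pos (u_pos (mul_pos hc₁ hs)) (u_pos (mul_pos hc₂ hs))
  rw [vMean, mul_one_sub (u (c₁ * s) + u (c₂ * s)), mul_div_cancel₀ _ this.ne']
  ring

theorem monotoneOn_u_ratio {a₁ a₂ b₁ b₂ : ℝ} (ha₂ : 0 < a₂) (hab₂ : a₂ ≤ b₂) (hb : b₂ ≤ b₁)
    (hba₁ : b₁ ≤ a₁) (hsum : a₁ + a₂ ≤ b₁ + b₂) :
    MonotoneOn (fun s => (u (a₁ * s) + u (a₂ * s)) / (u (b₁ * s) + u (b₂ * s))) (Ioi 0) := by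
  have hb₂ : 0 < b₂ := ha₂.trans_le hab₂
  have hb₁ : 0 < b₁ := hb₂.trans_le hb
  have ha₁ : 0 < a₁ := hb₁.trans_le hba₁
  have hden : ∀ s ∈ Ioi (0 : ℝ), 0 < u (b₁ * s) + u (b₂ * s) := fun s hs =>
    add_pos (u_pos (mul_pos hb₁ hs)) (u_pos (mul_pos hb₂ hs))
  refine monotoneOn_div_of_hasDerivAt (convex_Ioi 0)
    (fun s hs => hasDerivAt_u_comp_mul_add ha₁ ha₂ hs)
    (fun s hs => hasDerivAt_u_comp_mul_add hb₁ hb₂ hs) (fun s hs => (hden s hs).ne') fun s hs => ?_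
  rw [interior_Ioi, mem_Ioi] at hs
  have hmean : vMean (a₁ * s) (a₂ * s) ≤ vMean (b₁ * s) (b₂ * s) := by
    apply vMean_le_vMean (mul_pos ha₂ hs) <;> nlinarith
  have hnum := add_pos (u_pos (mul_pos ha₁ hs)) (u_pos (mul_pos ha₂ hs))
  have := mul_le_mul_of_nonneg_left (sub_le_sub_left hmean 1) (mul_pos hnum (hden s hs)).le
  rw [mul_div_assoc', div_mul_eq_mul_div, div_le_div_iff_of_pos_right hs]
  linarith

theorem monotoneOn_rhr_ratio_of_le {α lam₁ lam₂ θ₁ θ₂ : ℝ} (hα : 0 ≤ α) (hα1 : α ≤ 1)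
    (hθ₂ : 0 < θ₂) (hlam : lam₂ ≤ lam₁) (hθ : θ₂ ≤ θ₁) (hsum : lam₁ + lam₂ = θ₁ + θ₂)
    (hmax : lam₁ ≤ θ₁) :
    MonotoneOn (fun t => (u ((θ₁ * t) ^ α) + u ((θ₂ * t) ^ α)) /
      (u ((lam₁ * t) ^ α) + u ((lam₂ * t) ^ α))) (Ioi 0) := by
  have hθlam₂ : θ₂ ≤ lam₂ := by linarith
  have hlam₂ : 0 < lam₂ := hθ₂.trans_le hθlam₂
  have hF := monotoneOn_u_ratio (rpow_pos_of_pos hθ₂ α) (rpow_le_rpow hθ₂.le hθlam₂ hα)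
    (rpow_le_rpow hlam₂.le hlam hα) (rpow_le_rpow (hlam₂.le.trans hlam) hmax hα)
    ((concaveOn_rpow hα hα1).add_le_add_of_le_of_le (hθ₂.le.trans hθ) hθ₂.le (by linarith) hmax
      hsum)
  refine (hF.comp (fun s hs t _ hst => rpow_le_rpow (le_of_lt hs) hst hα)
    fun t ht => rpow_pos_of_pos ht α).congr fun t ht => ?_
  have ht : 0 < t := ht
  simp only [Function.comp, mul_rpow (hlam₂.le.trans hlam) ht.le, mul_rpow hlam₂.le ht.le,
    mul_rpow (hθ₂.le.trans hθ) ht.le, mul_rpow hθ₂.le ht.le]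

end ParallelWeibull

theorem parallel_weibull_rhr_ratio_monotone_general
    (α lam₁ lam₂ θ₁ θ₂ : ℝ) (hα : 0 < α) (hα1 : α ≤ 1)
    (hθ₁ : 0 < θ₁) (hθ₂ : 0 < θ₂)
    (hsum : lam₁ + lam₂ = θ₁ + θ₂) (hmax : max lam₁ lam₂ ≤ max θ₁ θ₂) :
    MonotoneOn
      (fun t : ℝ =>
        ((θ₁ * t) ^ α / (exp ((θ₁ * t) ^ α) - 1) +
            (θ₂ * t) ^ α / (exp ((θ₂ * t) ^ α) - 1)) /
          ((lam₁ * t) ^ α / (exp ((lam₁ * t) ^ α) - 1) +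
            (lam₂ * t) ^ α / (exp ((lam₂ * t) ^ α) - 1)))
      (Ioi (0 : ℝ)) := by
  have hsym (c₁ c₂ t : ℝ) :
      ParallelWeibull.u ((max c₁ c₂ * t) ^ α) + ParallelWeibull.u ((min c₁ c₂ * t) ^ α) =
        ParallelWeibull.u ((c₁ * t) ^ α) + ParallelWeibull.u ((c₂ * t) ^ α) := by
    rcases le_total c₁ c₂ with h | h <;> simp [h, add_comm]
  have h := ParallelWeibull.monotoneOn_rhr_ratio_of_le hα.le hα1 (lt_min hθ₁ hθ₂)
    min_le_max min_le_max (by linarith [min_add_max lam₁ lam₂, min_add_max θ₁ θ₂]) hmax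
  simp only [hsym] at h
  exact h

/-- For `0 < α ≤ 1`, if `(λ₁, λ₂) ≼^m (θ₁, θ₂)` (i.e. `λ₁ + λ₂ = θ₁ + θ₂` and
`max(λ₁,λ₂) ≤ max(θ₁,θ₂)`), then the ratio of reverse hazard rates
`r_{2:2}^θ(t) / r_{2:2}^λ(t) = [u(θ₁ t) + u(θ₂ t)] / [u(λ₁ t) + u(λ₂ t)]`, with
`u(s) = s^α / (e^{s^α} − 1)`, is increasing in `t` on `(0, ∞)`. -/
theorem parallel_weibull_rhr_ratio_monotone
    (α lam₁ lam₂ θ₁ θ₂ : ℝ) (hα : 0 < α) (hα1 : α ≤ 1)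
    (hlam₁ : 0 < lam₁) (hlam₂ : 0 < lam₂) (hθ₁ : 0 < θ₁) (hθ₂ : 0 < θ₂)
    (hsum : lam₁ + lam₂ = θ₁ + θ₂) (hmax : max lam₁ lam₂ ≤ max θ₁ θ₂) :
    MonotoneOn
      (fun t : ℝ =>
        ((θ₁ * t) ^ α / (exp ((θ₁ * t) ^ α) - 1) +
            (θ₂ * t) ^ α / (exp ((θ₂ * t) ^ α) - 1)) /
          ((lam₁ * t) ^ α / (exp ((lam₁ * t) ^ α) - 1) +
            (lam₂ * t) ^ α / (exp ((lam₂ * t) ^ α) - 1)))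
      (Ioi (0 : ℝ)) :=
  parallel_weibull_rhr_ratio_monotone_general α lam₁ lam₂ θ₁ θ₂ hα hα1 hθ₁ hθ₂ hsum hmax
end

section
/- Fix a real α > 0 and positive reals λ, λ₁, λ₁* such that λ₁* = min(λ, λ₁, λ₁*) and (λ₁, λ) is weakly majorized by (λ₁*, λ) (so that either λ₁* ≤ λ ≤ λ₁ or λ₁* ≤ λ₁ ≤ λ). Then the lifetime of the parallel system of two independent Weibull components with scale parameters (λ₁, λ) is smaller in the likelihood ratio order than that with scale parameters (λ₁*, λ); that is, the ratio of densities f_{2:2}*(t) / f_{2:2}(t) is increasing in t on (0, ∞). -/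
open Real Set

/-!
Substituting `x = t ^ α`, the density ratio becomes `K a' b x / K a b x` with `a' = λ₁* ^ α`,
`a = λ₁ ^ α`, `b = λ ^ α` and `K = parallelKernel`. With `u s = s / (e^s - 1)`, the
logarithmic derivative of `K a b` is `(u (a x) + u (b x) + 1 - M) / x`, where `M` is the mean
of `φ s = s + u s` over `a x, b x` with weights `u (a x), u (b x)`. `u` is antitone and
`φ = u ∘ Neg.neg` monotone because the secant slope `(e^s - 1) / s` of the convex function
`exp` is monotone. Replacing `a` by `a' ≤ min a b` therefore increases `u (a x)` and, since
`φ (a' x)` is then the smallest value and gets the larger weight, decreases `M`; so the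
logarithmic derivative of the numerator dominates that of the denominator.
-/

lemma monotoneOn_div_of_logDeriv_le {f g p q : ℝ → ℝ} {D : Set ℝ} (hD : Convex ℝ D)
    (hf : ∀ x ∈ D, HasDerivAt f (f x * p x) x) (hg : ∀ x ∈ D, HasDerivAt g (g x * q x) x)
    (hf₀ : ∀ x ∈ D, 0 ≤ f x) (hg₀ : ∀ x ∈ D, 0 < g x) (hqp : ∀ x ∈ D, q x ≤ p x) :
    MonotoneOn (fun x => f x / g x) D := by
  have hdiv : ∀ x ∈ D, HasDerivAt (fun x => f x / g x) (f x / g x * (p x - q x)) x :=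
    fun x hx => ((hf x hx).div (hg x hx) (hg₀ x hx).ne').congr_deriv (by
      field_simp [(hg₀ x hx).ne'])
  refine monotoneOn_of_hasDerivWithinAt_nonneg hD
    (fun x hx => (hdiv x hx).continuousAt.continuousWithinAt)
    (fun x hx => (hdiv x (interior_subset hx)).hasDerivWithinAt) fun x hx => ?_
  have hx := interior_subset hx
  exact mul_nonneg (div_nonneg (hf₀ x hx) (hg₀ x hx).le) (sub_nonneg.2 (hqp x hx))

lemma weightedMean_le {wp wq wr p q r : ℝ} (hwq : 0 < wq) (hwr : 0 < wr) (hw : wq ≤ wp)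
    (hpq : p ≤ q) (hpr : p ≤ r) :
    (wp * p + wr * r) / (wp + wr) ≤ (wq * q + wr * r) / (wq + wr) := by
  rw [div_le_div_iff₀ (by linarith) (by linarith)]
  linarith [mul_nonneg (mul_nonneg (hwq.le.trans hw) hwq.le) (sub_nonneg.2 hpq),
    mul_nonneg (mul_nonneg hwq.le hwr.le) (sub_nonneg.2 hpq),
    mul_nonneg (mul_nonneg hwr.le (sub_nonneg.2 hpr)) (sub_nonneg.2 hw)]

noncomputable def divExpSubOne (s : ℝ) : ℝ := s / (exp s - 1)

local notation "u" => divExpSubOne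

lemma exp_sub_one_ne_zero {s : ℝ} (hs : s ≠ 0) : exp s - 1 ≠ 0 :=
  sub_ne_zero.2 (mt (exp_eq_one_iff s).1 hs)

lemma exp_sub_one_div_pos {s : ℝ} (hs : s ≠ 0) : 0 < (exp s - 1) / s := by
  rcases hs.lt_or_gt with hs | hs
  · exact div_pos_of_neg_of_neg (sub_neg.2 (exp_lt_one_iff.2 hs)) hs
  · exact div_pos (sub_pos.2 (one_lt_exp_iff.2 hs)) hs

lemma monotoneOn_exp_sub_one_div : MonotoneOn (fun s => (exp s - 1) / s) {0}ᶜ :=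
  fun x hx y hy hxy => by
    simpa using convexOn_exp.secant_mono (mem_univ 0) (mem_univ x) (mem_univ y) hx hy hxy

lemma divExpSubOne_eq_inv (s : ℝ) : u s = ((exp s - 1) / s)⁻¹ := (inv_div _ _).symm

lemma divExpSubOne_pos {s : ℝ} (hs : s ≠ 0) : 0 < u s := by
  rw [divExpSubOne_eq_inv]
  exact inv_pos.2 (exp_sub_one_div_pos hs)

lemma antitoneOn_divExpSubOne : AntitoneOn divExpSubOne {0}ᶜ := fun x hx y hy hxy => by
  simp only [divExpSubOne_eq_inv]
  exact inv_anti₀ (exp_sub_one_div_pos hx) (monotoneOn_exp_sub_one_div hx hy hxy)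

lemma self_add_divExpSubOne {s : ℝ} (hs : s ≠ 0) : s + u s = u (-s) := by
  have h₁ := exp_sub_one_ne_zero hs
  have h₂ : 1 - exp s ≠ 0 := fun h => h₁ (by linarith)
  unfold divExpSubOne
  rw [exp_neg]
  field_simp
  ring

lemma monotoneOn_self_add_divExpSubOne : MonotoneOn (fun s => s + u s) {0}ᶜ :=
  fun x hx y hy hxy => by
    simp only [self_add_divExpSubOne hx, self_add_divExpSubOne hy]
    exact antitoneOn_divExpSubOne (neg_ne_zero.2 hy) (neg_ne_zero.2 hx) (neg_le_neg hxy)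

lemma hasDerivAt_divExpSubOne {s : ℝ} (hs : s ≠ 0) :
    HasDerivAt divExpSubOne (u s * (1 - s - u s) / s) s := by
  have hE := exp_sub_one_ne_zero hs
  refine ((hasDerivAt_id s).div ((hasDerivAt_exp s).sub_const 1) hE).congr_deriv ?_
  simp only [divExpSubOne, id]
  field_simp
  ring

lemma hasDerivAt_divExpSubOne_mul {c x : ℝ} (hc : c ≠ 0) (hx : x ≠ 0) :
    HasDerivAt (fun y => u (c * y)) (u (c * x) * (1 - c * x - u (c * x)) / x) x := by
  have h := (hasDerivAt_divExpSubOne (mul_ne_zero hc hx)).comp x ((hasDerivAt_id x).const_mul c)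
  refine h.congr_deriv ?_
  field_simp

lemma hasDerivAt_one_sub_exp_neg_mul {c x : ℝ} (hc : c ≠ 0) (hx : x ≠ 0) :
    HasDerivAt (fun y => 1 - exp (-(c * y)))
      ((1 - exp (-(c * x))) * (u (c * x) / x)) x := by
  have h := (((hasDerivAt_id x).const_mul c).neg.exp).const_sub 1
  refine h.congr_deriv ?_
  have := exp_sub_one_ne_zero (mul_ne_zero hc hx)
  simp only [divExpSubOne, id, Pi.neg_apply, exp_neg]
  field_simp

/-- `parallelKernel a b x / x` is the density at `x` of the maximum of independent exponential
variables with rates `a` and `b`. -/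
noncomputable def parallelKernel (a b x : ℝ) : ℝ :=
  (1 - exp (-(a * x))) * (1 - exp (-(b * x))) * (u (a * x) + u (b * x))

noncomputable def parallelKernelLogDeriv (a b x : ℝ) : ℝ :=
  (u (a * x) + u (b * x) + 1 -
    (u (a * x) * (a * x + u (a * x)) + u (b * x) * (b * x + u (b * x))) /
      (u (a * x) + u (b * x))) / x

lemma parallelKernel_pos {a b x : ℝ} (ha : 0 < a) (hb : 0 < b) (hx : 0 < x) :
    0 < parallelKernel a b x := by
  have hG : ∀ {c}, 0 < c → 0 < 1 - exp (-(c * x)) := fun hc =>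
    sub_pos.2 (exp_lt_one_iff.2 (neg_neg_of_pos (mul_pos hc hx)))
  exact mul_pos (mul_pos (hG ha) (hG hb))
    (add_pos (divExpSubOne_pos (mul_pos ha hx).ne') (divExpSubOne_pos (mul_pos hb hx).ne'))

lemma hasDerivAt_parallelKernel {a b x : ℝ} (ha : a ≠ 0) (hb : b ≠ 0) (hx : x ≠ 0) :
    HasDerivAt (parallelKernel a b) (parallelKernel a b x * parallelKernelLogDeriv a b x) x := by
  have hS : u (a * x) + u (b * x) ≠ 0 :=
    (add_pos (divExpSubOne_pos (mul_ne_zero ha hx))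
      (divExpSubOne_pos (mul_ne_zero hb hx))).ne'
  have h := ((hasDerivAt_one_sub_exp_neg_mul ha hx).mul
    (hasDerivAt_one_sub_exp_neg_mul hb hx)).mul
    ((hasDerivAt_divExpSubOne_mul ha hx).add (hasDerivAt_divExpSubOne_mul hb hx))
  refine h.congr_deriv ?_
  simp only [parallelKernel, parallelKernelLogDeriv, Pi.mul_apply, Pi.add_apply]
  generalize u (a * x) = p, u (b * x) = q at hS ⊢
  field_simp
  ring

lemma parallelKernelLogDeriv_le {a a' b x : ℝ} (ha' : 0 < a') (ha'a : a' ≤ a) (ha'b : a' ≤ b)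
    (hx : 0 < x) : parallelKernelLogDeriv a b x ≤ parallelKernelLogDeriv a' b x := by
  have hne : ∀ {c}, 0 < c → c * x ≠ 0 := fun hc => (mul_pos hc hx).ne'
  have hu : u (a * x) ≤ u (a' * x) := antitoneOn_divExpSubOne (hne ha') (hne (ha'.trans_le ha'a))
    (mul_le_mul_of_nonneg_right ha'a hx.le)
  have hM := weightedMean_le (divExpSubOne_pos (hne (ha'.trans_le ha'a)))
    (divExpSubOne_pos (hne (ha'.trans_le ha'b))) hu
    (monotoneOn_self_add_divExpSubOne (hne ha') (hne (ha'.trans_le ha'a))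
      (mul_le_mul_of_nonneg_right ha'a hx.le))
    (monotoneOn_self_add_divExpSubOne (hne ha') (hne (ha'.trans_le ha'b))
      (mul_le_mul_of_nonneg_right ha'b hx.le))
  exact div_le_div_of_nonneg_right (by linarith) hx.le

lemma parallelKernel_div_monotoneOn {a a' b : ℝ} (ha' : 0 < a') (ha'a : a' ≤ a)
    (ha'b : a' ≤ b) :
    MonotoneOn (fun x => parallelKernel a' b x / parallelKernel a b x) (Ioi 0) := by
  have ha := ha'.trans_le ha'a
  have hb := ha'.trans_le ha'b
  exact monotoneOn_div_of_logDeriv_le (convex_Ioi 0)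
    (fun x hx => hasDerivAt_parallelKernel ha'.ne' hb.ne' (ne_of_gt hx))
    (fun x hx => hasDerivAt_parallelKernel ha.ne' hb.ne' (ne_of_gt hx))
    (fun x hx => (parallelKernel_pos ha' hb hx).le) (fun x hx => parallelKernel_pos ha hb hx)
    (fun x hx => parallelKernelLogDeriv_le ha' ha'a ha'b hx)

lemma parallel_weibull_density_eq {α a b t : ℝ} (ha : 0 ≤ a) (hb : 0 ≤ b) (ht : 0 ≤ t) :
    (1 - exp (-((a * t) ^ α))) * (1 - exp (-((b * t) ^ α))) *
        ((α / t) * ((a * t) ^ α / (exp ((a * t) ^ α) - 1) +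
          (b * t) ^ α / (exp ((b * t) ^ α) - 1))) =
      α / t * parallelKernel (a ^ α) (b ^ α) (t ^ α) := by
  rw [mul_rpow ha ht, mul_rpow hb ht, parallelKernel, divExpSubOne, divExpSubOne]
  ring

theorem parallel_weibull_lr_order_weak_maj_general
    (α lam lam₁ lam₁s : ℝ) (hα : 0 < α)
    (hlam : 0 < lam) (hlam₁ : 0 < lam₁) (hlam₁s : 0 < lam₁s)
    (hmin : lam₁s = min lam (min lam₁ lam₁s)) :
    MonotoneOn
      (fun t : ℝ =>
        ((1 - exp (-((lam₁s * t) ^ α))) * (1 - exp (-((lam * t) ^ α))) *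
            ((α / t) *
              ((lam₁s * t) ^ α / (exp ((lam₁s * t) ^ α) - 1) +
                (lam * t) ^ α / (exp ((lam * t) ^ α) - 1)))) /
          ((1 - exp (-((lam₁ * t) ^ α))) * (1 - exp (-((lam * t) ^ α))) *
            ((α / t) *
              ((lam₁ * t) ^ α / (exp ((lam₁ * t) ^ α) - 1) +
                (lam * t) ^ α / (exp ((lam * t) ^ α) - 1)))))
      (Ioi (0 : ℝ)) := by
  have hle : lam₁s ≤ lam ∧ lam₁s ≤ lam₁ := by simpa using hmin.le
  have hK := parallelKernel_div_monotoneOn (rpow_pos_of_pos hlam₁s α)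
    (rpow_le_rpow hlam₁s.le hle.2 hα.le) (rpow_le_rpow hlam₁s.le hle.1 hα.le)
  have hpow : MonotoneOn (fun t : ℝ => t ^ α) (Ioi 0) :=
    (monotoneOn_rpow_Ici_of_exponent_nonneg hα.le).mono Ioi_subset_Ici_self
  refine (hK.comp hpow fun t ht => rpow_pos_of_pos ht α).congr fun t (ht : 0 < t) => ?_
  rw [parallel_weibull_density_eq hlam₁s.le hlam.le ht.le,
    parallel_weibull_density_eq hlam₁.le hlam.le ht.le,
    mul_div_mul_left _ _ (div_ne_zero hα.ne' ht.ne')]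
  rfl

/-- For any `α > 0`, if `λ₁* = min(λ, λ₁, λ₁*)` and `(λ₁, λ) ≼^w (λ₁*, λ)`
(i.e. `min(λ₁, λ) ≥ min(λ₁*, λ)` and `λ₁ + λ ≥ λ₁* + λ`), then `X_{2:2} ≤_lr Y_{2:2}`:
the ratio of densities `f_{2:2}*(t) / f_{2:2}(t)` of the parallel Weibull systems with
scale parameters `(λ₁*, λ)` and `(λ₁, λ)`, where the density for parameters `(a, b)` is
`(1 − e^{−(a t)^α})(1 − e^{−(b t)^α}) · (α/t) · [u(a t) + u(b t)]` with
`u(s) = s^α / (e^{s^α} − 1)`, is increasing in `t` on `(0, ∞)`. -/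
theorem parallel_weibull_lr_order_weak_maj
    (α lam lam₁ lam₁s : ℝ) (hα : 0 < α)
    (hlam : 0 < lam) (hlam₁ : 0 < lam₁) (hlam₁s : 0 < lam₁s)
    (hmin : lam₁s = min lam (min lam₁ lam₁s))
    (hwmaj : min lam₁s lam ≤ min lam₁ lam ∧ lam₁s + lam ≤ lam₁ + lam) :
    MonotoneOn
      (fun t : ℝ =>
        ((1 - exp (-((lam₁s * t) ^ α))) * (1 - exp (-((lam * t) ^ α))) *
            ((α / t) *
              ((lam₁s * t) ^ α / (exp ((lam₁s * t) ^ α) - 1) +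
                (lam * t) ^ α / (exp ((lam * t) ^ α) - 1)))) /
          ((1 - exp (-((lam₁ * t) ^ α))) * (1 - exp (-((lam * t) ^ α))) *
            ((α / t) *
              ((lam₁ * t) ^ α / (exp ((lam₁ * t) ^ α) - 1) +
                (lam * t) ^ α / (exp ((lam * t) ^ α) - 1)))))
      (Ioi (0 : ℝ)) :=
  parallel_weibull_lr_order_weak_maj_general α lam lam₁ lam₁s hα hlam hlam₁ hlam₁s hmin
end
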